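/- arXiv:2310.05750 — 2 statements merged into one kernel-verified Lean document; each statement's English description precedes it below -/
import Mathlib

section
/- Weighted log-Sobolev inequality for nonlinear images of a measure satisfying a log-Sobolev inequality (finite-dimensional contraction principle): Let γ be a probability measure on ℝ^n satisfying the logarithmic Sobolev inequality Ent_γ(h²) ≤ 2 ∫_{ℝ^n} ‖∇h‖² dγ for every differentiable h : ℝ^n → ℝ for which the right-hand side is finite. Let Ψ : ℝ^n → ℝ^m be differentiable, G : ℝ^m → [0,∞] measurable, and c > 0 such that the operator norm bound ‖DΨ(x)‖² ≤ c · G(Ψ(x)) holds for γ-almost every x ∈ ℝ^n. Then the pushforward measure μ = γ ∘ Ψ⁻¹ on ℝ^m satisfies the weighted logarithmic Sobolev inequality WLSI(2cG): for every differentiable f : ℝ^m → ℝ for which the right-hand side is finite, Ent_μ(f²) ≤ 2 ∫_{ℝ^m} |∇f|² · (2c G) dμ. -/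
open MeasureTheory ENNReal

/-- The entropy functional `Ent_μ(u) = ∫ u log(u / ∫ u dμ) dμ`. -/
noncomputable def entFun {E : Type*} [MeasurableSpace E] (μ : Measure E) (u : E → ℝ) : ℝ :=
  ∫ x, u x * Real.log (u x / ∫ y, u y ∂μ) ∂μ

/-- **Weighted log-Sobolev inequality for nonlinear images of a measure satisfying a
log-Sobolev inequality (finite-dimensional contraction principle).** -/
theorem wlsi_contraction_principle
    {n m : ℕ}
    (γ : Measure (EuclideanSpace ℝ (Fin n))) [IsProbabilityMeasure γ]
    (hLSI : ∀ h : EuclideanSpace ℝ (Fin n) → ℝ, Differentiable ℝ h →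
      (∫⁻ x, ENNReal.ofReal (‖fderiv ℝ h x‖ ^ 2) ∂γ) ≠ ∞ →
      ENNReal.ofReal (entFun γ (fun x => h x ^ 2)) ≤
        2 * ∫⁻ x, ENNReal.ofReal (‖fderiv ℝ h x‖ ^ 2) ∂γ)
    (Ψ : EuclideanSpace ℝ (Fin n) → EuclideanSpace ℝ (Fin m))
    (hΨ : Differentiable ℝ Ψ)
    (G : EuclideanSpace ℝ (Fin m) → ℝ≥0∞) (hG : Measurable G)
    (c : ℝ) (hc : 0 < c)
    (hbound : ∀ᵐ x ∂γ, ENNReal.ofReal (‖fderiv ℝ Ψ x‖ ^ 2) ≤ ENNReal.ofReal c * G (Ψ x)) :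
    ∀ f : EuclideanSpace ℝ (Fin m) → ℝ, Differentiable ℝ f →
      (∫⁻ y, ENNReal.ofReal (‖fderiv ℝ f y‖ ^ 2) * (ENNReal.ofReal (2 * c) * G y)
          ∂(γ.map Ψ)) ≠ ∞ →
      ENNReal.ofReal (entFun (γ.map Ψ) (fun y => f y ^ 2)) ≤
        2 * ∫⁻ y, ENNReal.ofReal (‖fderiv ℝ f y‖ ^ 2) * (ENNReal.ofReal (2 * c) * G y)
          ∂(γ.map Ψ) := by
  intro f hf hfin
  have hΨm : Measurable Ψ := hΨ.continuous.measurable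
  set h : EuclideanSpace ℝ (Fin n) → ℝ := fun x => f (Ψ x) with hh_def
  have hh : Differentiable ℝ h := hf.comp hΨ
  have hf'm : Measurable fun y => ENNReal.ofReal (‖fderiv ℝ f y‖ ^ 2) :=
    ((measurable_fderiv ℝ f).norm.pow measurable_const).ennreal_ofReal
  -- pointwise a.e. bound on the derivative of the composition
  have hpt : ∀ᵐ x ∂γ, ENNReal.ofReal (‖fderiv ℝ h x‖ ^ 2) ≤
      ENNReal.ofReal (‖fderiv ℝ f (Ψ x)‖ ^ 2) * (ENNReal.ofReal c * G (Ψ x)) := by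
    filter_upwards [hbound] with x hx
    have hcomp : fderiv ℝ h x = (fderiv ℝ f (Ψ x)).comp (fderiv ℝ Ψ x) :=
      fderiv_comp x (hf (Ψ x)) (hΨ x)
    have h1 : ‖fderiv ℝ h x‖ ^ 2 ≤ ‖fderiv ℝ f (Ψ x)‖ ^ 2 * ‖fderiv ℝ Ψ x‖ ^ 2 := by
      rw [hcomp, ← mul_pow]
      exact pow_le_pow_left₀ (norm_nonneg _)
        ((fderiv ℝ f (Ψ x)).opNorm_comp_le _) 2
    calc ENNReal.ofReal (‖fderiv ℝ h x‖ ^ 2)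
        ≤ ENNReal.ofReal (‖fderiv ℝ f (Ψ x)‖ ^ 2 * ‖fderiv ℝ Ψ x‖ ^ 2) :=
          ENNReal.ofReal_le_ofReal h1
      _ = ENNReal.ofReal (‖fderiv ℝ f (Ψ x)‖ ^ 2) * ENNReal.ofReal (‖fderiv ℝ Ψ x‖ ^ 2) :=
          ENNReal.ofReal_mul (by positivity)
      _ ≤ _ := mul_le_mul_right hx _
  -- transfer the weighted integral through the pushforward
  have hmapint : ∫⁻ y, ENNReal.ofReal (‖fderiv ℝ f y‖ ^ 2) * (ENNReal.ofReal c * G y)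
        ∂(γ.map Ψ)
      = ∫⁻ x, ENNReal.ofReal (‖fderiv ℝ f (Ψ x)‖ ^ 2) * (ENNReal.ofReal c * G (Ψ x)) ∂γ :=
    lintegral_map (hf'm.mul (measurable_const.mul hG)) hΨm
  -- relate the weight `2c` to `c`
  have h2c : ∀ y, ENNReal.ofReal (‖fderiv ℝ f y‖ ^ 2) * (ENNReal.ofReal (2 * c) * G y)
      = 2 * (ENNReal.ofReal (‖fderiv ℝ f y‖ ^ 2) * (ENNReal.ofReal c * G y)) := by
    intro y
    have : ENNReal.ofReal (2 * c) = 2 * ENNReal.ofReal c := by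
      rw [ENNReal.ofReal_mul (by norm_num : (0:ℝ) ≤ 2)]
      norm_num
    rw [this]; ring
  have hI2 : (∫⁻ y, ENNReal.ofReal (‖fderiv ℝ f y‖ ^ 2) * (ENNReal.ofReal (2 * c) * G y)
        ∂(γ.map Ψ))
      = 2 * ∫⁻ y, ENNReal.ofReal (‖fderiv ℝ f y‖ ^ 2) * (ENNReal.ofReal c * G y)
        ∂(γ.map Ψ) := by
    simp_rw [h2c]
    exact lintegral_const_mul 2 (hf'm.mul (measurable_const.mul hG))
  set I1 : ℝ≥0∞ := ∫⁻ y, ENNReal.ofReal (‖fderiv ℝ f y‖ ^ 2) * (ENNReal.ofReal c * G y)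
    ∂(γ.map Ψ) with hI1_def
  have hI1fin : I1 ≠ ∞ := by
    intro hI1top
    rw [hI2, hI1top] at hfin
    simp at hfin
  -- finiteness of the energy of h
  have hγle : (∫⁻ x, ENNReal.ofReal (‖fderiv ℝ h x‖ ^ 2) ∂γ) ≤ I1 := by
    rw [hmapint]
    exact lintegral_mono_ae hpt
  have hγfin : (∫⁻ x, ENNReal.ofReal (‖fderiv ℝ h x‖ ^ 2) ∂γ) ≠ ∞ :=
    fun htop => hI1fin (top_le_iff.mp (htop ▸ hγle))
  -- transfer entropy through the pushforward
  have hcont : Continuous fun y => f y ^ 2 := (hf.continuous).pow 2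
  have hent : entFun (γ.map Ψ) (fun y => f y ^ 2) = entFun γ (fun x => h x ^ 2) := by
    unfold entFun
    have hin : (∫ y, f y ^ 2 ∂(γ.map Ψ)) = ∫ x, h x ^ 2 ∂γ :=
      integral_map hΨm.aemeasurable hcont.aestronglyMeasurable
    rw [hin]
    exact integral_map hΨm.aemeasurable
      ((hcont.measurable.mul
        (Real.measurable_log.comp (hcont.div_const _).measurable)).aestronglyMeasurable)
  calc ENNReal.ofReal (entFun (γ.map Ψ) (fun y => f y ^ 2))
      = ENNReal.ofReal (entFun γ (fun x => h x ^ 2)) := by rw [hent]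
    _ ≤ 2 * ∫⁻ x, ENNReal.ofReal (‖fderiv ℝ h x‖ ^ 2) ∂γ := hLSI h hh hγfin
    _ ≤ 2 * I1 := mul_le_mul_right hγle 2
    _ ≤ 2 * (2 * I1) := by
        exact mul_le_mul_right (le_mul_of_one_le_left zero_le one_le_two) 2
    _ = 2 * ∫⁻ y, ENNReal.ofReal (‖fderiv ℝ f y‖ ^ 2) * (ENNReal.ofReal (2 * c) * G y)
        ∂(γ.map Ψ) := by rw [hI2]
end

section
/- Marginals of measures satisfying a weighted log-Sobolev inequality: Let μ be a probability measure on ℝ^m = ℝ × ℝ^{m−1} satisfying the weighted logarithmic Sobolev inequality WLSI(G) with constant C > 0 for a weight G : ℝ^m → [0,∞], and assume G ∈ L¹(μ). Write μ(dx₁ dx') = π(dx₁ | x') μ₁(dx'), where μ₁ is the marginal of μ on the last m−1 coordinates and π is the disintegration (conditional kernel) of μ over the first coordinate. Define G₁ : ℝ^{m−1} → [0,∞] by G₁(x') = ∫_ℝ G(x₁, x') π(dx₁ | x'); then G₁ is finite μ₁-almost everywhere and μ₁ satisfies the weighted logarithmic Sobolev inequality: Ent_{μ₁}(f²) ≤ 2C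 ∫_{ℝ^{m−1}} |∇f|² G₁ dμ₁ for every differentiable f : ℝ^{m−1} → ℝ for which the right-hand side is finite. -/
open MeasureTheory ENNReal ProbabilityTheory

lemma norm_comp_snd_eq {F : Type*} [NormedAddCommGroup F] [NormedSpace ℝ F]
    (L : F →L[ℝ] ℝ) : ‖L.comp (ContinuousLinearMap.snd ℝ ℝ F)‖ = ‖L‖ := by
  refine le_antisymm ?_ ?_
  · calc ‖L.comp (ContinuousLinearMap.snd ℝ ℝ F)‖
        ≤ ‖L‖ * ‖ContinuousLinearMap.snd ℝ ℝ F‖ := ContinuousLinearMap.opNorm_comp_le _ _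
      _ ≤ ‖L‖ * 1 := by gcongr; exact ContinuousLinearMap.norm_snd_le ℝ ℝ F
      _ = ‖L‖ := mul_one _
  · refine L.opNorm_le_bound (norm_nonneg _) (fun y => ?_)
    have h : L y = (L.comp (ContinuousLinearMap.snd ℝ ℝ F)) ((0 : ℝ), y) := rfl
    rw [h]
    calc ‖(L.comp (ContinuousLinearMap.snd ℝ ℝ F)) ((0 : ℝ), y)‖
        ≤ ‖L.comp (ContinuousLinearMap.snd ℝ ℝ F)‖ * ‖((0 : ℝ), y)‖ :=
          ContinuousLinearMap.le_opNorm _ _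
      _ = ‖L.comp (ContinuousLinearMap.snd ℝ ℝ F)‖ * ‖y‖ := by
          simp [Prod.norm_def, norm_nonneg]

/-- **Marginals of measures satisfying a weighted log-Sobolev inequality.**
Here the underlying space `ℝ^m` is modelled as `ℝ × ℝ^{m-1}`, with
`F = EuclideanSpace ℝ (Fin k)` standing for the last `m - 1` coordinates. -/
theorem wlsi_marginal
    {k : ℕ}
    (μ : Measure (ℝ × EuclideanSpace ℝ (Fin k))) [IsProbabilityMeasure μ]
    (G : ℝ × EuclideanSpace ℝ (Fin k) → ℝ≥0∞) (hGmeas : Measurable G)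
    (C : ℝ) (hC : 0 < C)
    (hWLSI : ∀ f : ℝ × EuclideanSpace ℝ (Fin k) → ℝ, Differentiable ℝ f →
      (∫⁻ z, ENNReal.ofReal (‖fderiv ℝ f z‖ ^ 2) * G z ∂μ) ≠ ∞ →
      ENNReal.ofReal (entFun μ (fun z => f z ^ 2)) ≤
        ENNReal.ofReal (2 * C) * ∫⁻ z, ENNReal.ofReal (‖fderiv ℝ f z‖ ^ 2) * G z ∂μ)
    (hGint : ∫⁻ z, G z ∂μ ≠ ∞)
    (μ₁ : Measure (EuclideanSpace ℝ (Fin k))) [IsProbabilityMeasure μ₁]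
    (π : Kernel (EuclideanSpace ℝ (Fin k)) ℝ) [IsMarkovKernel π]
    (hdisint : μ = (μ₁ ⊗ₘ π).map Prod.swap) :
    (∀ᵐ y ∂μ₁, (∫⁻ x₁, G (x₁, y) ∂(π y)) ≠ ∞) ∧
    ∀ f : EuclideanSpace ℝ (Fin k) → ℝ, Differentiable ℝ f →
      (∫⁻ y, ENNReal.ofReal (‖fderiv ℝ f y‖ ^ 2) * (∫⁻ x₁, G (x₁, y) ∂(π y)) ∂μ₁) ≠ ∞ →
      ENNReal.ofReal (entFun μ₁ (fun y => f y ^ 2)) ≤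
        ENNReal.ofReal (2 * C) *
          ∫⁻ y, ENNReal.ofReal (‖fderiv ℝ f y‖ ^ 2) * (∫⁻ x₁, G (x₁, y) ∂(π y)) ∂μ₁ := by
  -- iterated lintegral formula
  have hmap : ∀ φ : ℝ × EuclideanSpace ℝ (Fin k) → ℝ≥0∞, Measurable φ →
      ∫⁻ z, φ z ∂μ = ∫⁻ y, ∫⁻ x, φ (x, y) ∂(π y) ∂μ₁ := by
    intro φ hφ
    rw [hdisint, lintegral_map hφ measurable_swap]
    exact Measure.lintegral_compProd (hφ.comp measurable_swap)
  -- first claim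
  have hG1meas : Measurable fun y => ∫⁻ x, G (x, y) ∂(π y) := by
    exact Measurable.lintegral_kernel_prod_right (hGmeas.comp measurable_swap)
  have hGfin : ∫⁻ y, ∫⁻ x, G (x, y) ∂(π y) ∂μ₁ ≠ ∞ := by
    rw [← hmap G hGmeas]; exact hGint
  have hae : ∀ᵐ y ∂μ₁, (∫⁻ x₁, G (x₁, y) ∂(π y)) ≠ ∞ := by
    filter_upwards [ae_lt_top hG1meas hGfin] with y hy using hy.ne
  refine ⟨hae, ?_⟩
  -- marginal map
  have hsnd : μ.map Prod.snd = μ₁ := by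
    rw [hdisint, Measure.map_map measurable_snd measurable_swap]
    have h1 : (Prod.snd ∘ Prod.swap : EuclideanSpace ℝ (Fin k) × ℝ → EuclideanSpace ℝ (Fin k))
        = Prod.fst := rfl
    rw [h1]
    have h2 : (μ₁ ⊗ₘ π).map Prod.fst = (μ₁ ⊗ₘ π).fst := rfl
    rw [h2, Measure.fst_compProd]
  have hmapI : ∀ h : EuclideanSpace ℝ (Fin k) → ℝ, Measurable h →
      ∫ z, h z.2 ∂μ = ∫ y, h y ∂μ₁ := by
    intro h hh
    rw [← hsnd, integral_map measurable_snd.aemeasurable hh.aestronglyMeasurable]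
  intro f hf hfin
  set g : ℝ × EuclideanSpace ℝ (Fin k) → ℝ := fun z => f z.2 with hg_def
  have hg : Differentiable ℝ g := hf.comp differentiable_snd
  have hfd : ∀ z : ℝ × EuclideanSpace ℝ (Fin k), ‖fderiv ℝ g z‖ = ‖fderiv ℝ f z.2‖ := by
    intro z
    have h1 : fderiv ℝ g z
        = (fderiv ℝ f z.2).comp (fderiv ℝ (Prod.snd : ℝ × EuclideanSpace ℝ (Fin k) →
            EuclideanSpace ℝ (Fin k)) z) :=
      fderiv_comp z (hf z.2) (differentiable_snd z)
    rw [h1, fderiv_snd, norm_comp_snd_eq]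
  -- key integral identity
  have hmeasφ : Measurable fun z : ℝ × EuclideanSpace ℝ (Fin k) =>
      ENNReal.ofReal (‖fderiv ℝ g z‖ ^ 2) * G z :=
    (((measurable_fderiv ℝ g).norm.pow measurable_const).ennreal_ofReal).mul hGmeas
  have key : ∫⁻ z, ENNReal.ofReal (‖fderiv ℝ g z‖ ^ 2) * G z ∂μ
      = ∫⁻ y, ENNReal.ofReal (‖fderiv ℝ f y‖ ^ 2) * ∫⁻ x₁, G (x₁, y) ∂(π y) ∂μ₁ := by
    rw [hmap _ hmeasφ]
    refine lintegral_congr fun y => ?_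
    have h2 : ∀ x : ℝ, ENNReal.ofReal (‖fderiv ℝ g (x, y)‖ ^ 2) * G (x, y)
        = ENNReal.ofReal (‖fderiv ℝ f y‖ ^ 2) * G (x, y) := by
      intro x; rw [hfd (x, y)]
    simp_rw [h2]
    exact lintegral_const_mul _ (hGmeas.comp measurable_prodMk_right)
  -- entropy identity
  have hfmeas : Measurable f := hf.continuous.measurable
  have hint2 : ∫ z, g z ^ 2 ∂μ = ∫ y, f y ^ 2 ∂μ₁ :=
    hmapI (fun y => f y ^ 2) (hfmeas.pow measurable_const)
  have hhm : Measurable fun y => f y ^ 2 *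
      Real.log (f y ^ 2 / ∫ y, f y ^ 2 ∂μ₁) := by
    refine (hfmeas.pow measurable_const).mul ?_
    exact Real.measurable_log.comp ((hfmeas.pow measurable_const).div_const _)
  have hent : entFun μ (fun z => g z ^ 2) = entFun μ₁ (fun y => f y ^ 2) := by
    simp only [entFun]
    rw [hint2]
    exact hmapI (fun y => f y ^ 2 * Real.log (f y ^ 2 / ∫ y, f y ^ 2 ∂μ₁)) hhm
  have hfin' : (∫⁻ z, ENNReal.ofReal (‖fderiv ℝ g z‖ ^ 2) * G z ∂μ) ≠ ∞ := by
    rw [key]; exact hfin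
  have hconc := hWLSI g hg hfin'
  rw [hent, key] at hconc
  exact hconc
end
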